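/- arXiv:2409.07915 — 4 statements merged into one kernel-verified Lean document; each statement's English description precedes it below -/
import Mathlib

section
/- Let b_1, …, b_k (k ≥ 1) be integers with b_i ≥ 2, and let c_1, …, c_ℓ be the 'dual' sequence obtained by the rule: if (b_1,…,b_k) = (n₀·2, m₁+3, n₁·2, m₂+3, …, m_s+3, n_s·2) with n_i ≥ 0 and m_i ≥ 0 (where n·2 denotes n copies of 2), then (c_1,…,c_ℓ) = (n₀+1) if s = 0, and (c_1,…,c_ℓ) = (n₀+2, m₁·2, n₁+3, …, m_s·2, n_s+2) if s > 0. Then (b_1,…,b_k) = (c_1,…,c_ℓ) (in particular k = ℓ) if and only if k = 1 and b_1 = 2. -/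
/-- The sequence `(n₀·2, m₁+3, n₁·2, m₂+3, …, m_s+3, n_s·2)`, where `n·2` denotes `n`
copies of `2`.  Here `n 0, …, n s` and `m 1, …, m s` encode the decomposition of a
sequence of integers `≥ 2` into runs of `2`'s separated by entries `≥ 3`. -/
def buildB (s : ℕ) (n m : ℕ → ℕ) : List ℤ :=
  List.replicate (n 0) 2 ++
    (List.range s).flatMap (fun i => ((m (i + 1) : ℤ) + 3) :: List.replicate (n (i + 1)) 2)

/-- The dual sequence: `(n₀+1)` if `s = 0`, and
`(n₀+2, m₁·2, n₁+3, …, m_s·2, n_s+2)` if `s > 0`. -/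
def buildC (s : ℕ) (n m : ℕ → ℕ) : List ℤ :=
  if s = 0 then [(n 0 : ℤ) + 1]
  else ((n 0 : ℤ) + 2) ::
    (List.range s).flatMap (fun i =>
      List.replicate (m (i + 1)) (2 : ℤ) ++ [(n (i + 1) : ℤ) + if i + 1 = s then 2 else 3])


/-
For `s = 0` both sides say that `n₀ = 1`. For `s > 0` neither side holds: the dual sequence starts
with `n₀ + 2`, whereas `b` starts with `2` when `n₀ > 0` and with `m₁ + 3 ≥ 3` when `n₀ = 0`;
and `b` contains the entry `m₁ + 3 ≠ 2`.
-/

section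

variable (n m : ℕ → ℕ)

theorem buildB_zero : buildB 0 n m = List.replicate (n 0) 2 := by
  simp [buildB]

theorem buildC_zero : buildC 0 n m = [(n 0 : ℤ) + 1] := rfl

theorem head?_buildB_succ (s : ℕ) :
    (buildB (s + 1) n m).head? = some (if n 0 = 0 then (m 1 : ℤ) + 3 else 2) := by
  rw [buildB, List.range_succ_eq_map]
  cases n 0 <;> simp [List.replicate_succ]

theorem head?_buildC_succ (s : ℕ) : (buildC (s + 1) n m).head? = some ((n 0 : ℤ) + 2) := by
  simp [buildC]

theorem add_three_mem_buildB {s i : ℕ} (hi : i < s) : (m (i + 1) : ℤ) + 3 ∈ buildB s n m := by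
  simp only [buildB, List.mem_append, List.mem_flatMap, List.mem_range, List.mem_cons]
  exact Or.inr ⟨i, hi, Or.inl rfl⟩

theorem buildB_succ_ne_buildC_succ (s : ℕ) : buildB (s + 1) n m ≠ buildC (s + 1) n m := by
  intro h
  have heads := congrArg List.head? h
  rw [head?_buildB_succ, head?_buildC_succ] at heads
  split_ifs at heads <;> simp at heads <;> omega

theorem buildB_succ_ne_singleton_two (s : ℕ) : buildB (s + 1) n m ≠ [2] := by
  intro h
  have hmem := add_three_mem_buildB n m (Nat.zero_lt_succ s)
  rw [h, List.mem_singleton] at hmem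
  omega

end

theorem stmt4_general (s : ℕ) (n m : ℕ → ℕ) :
    buildB s n m = buildC s n m ↔ buildB s n m = [(2 : ℤ)] := by
  cases s with
  | zero =>
      rw [buildB_zero, buildC_zero]
      rcases n 0 with _ | _ | k <;> simp [List.replicate_succ]
  | succ s =>
      simp only [buildB_succ_ne_buildC_succ, buildB_succ_ne_singleton_two]

/-- Let `b_1, …, b_k` (`k ≥ 1`) be integers `≥ 2`, decomposed as
`(n₀·2, m₁+3, n₁·2, …, m_s+3, n_s·2)`, and let `(c_1,…,c_ℓ)` be the dual sequence.
Then `(b_1,…,b_k) = (c_1,…,c_ℓ)` if and only if `k = 1` and `b_1 = 2`, i.e. iff the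
sequence is the singleton `(2)`. -/
theorem stmt4 (s : ℕ) (n m : ℕ → ℕ) (hne : buildB s n m ≠ []) :
    buildB s n m = buildC s n m ↔ buildB s n m = [(2 : ℤ)] :=
  stmt4_general s n m
end

section
/- Let b_1, …, b_k be integers ≥ 2 and let (c_1, …, c_ℓ) be the dual sequence of (b_1, …, b_k) as in Riemenschneider/Neumann duality (runs of 2's of length n and entries m+3 are exchanged via (n₀·2, m₁+3, n₁·2, …, m_s+3, n_s·2) ↦ (n₀+2, m₁·2, n₁+3, …, m_s·2, n_s+2), with the convention (n₀·2) ↦ (n₀+1) when s = 0). Then the continued fractions satisfy 1/[b_1,…,b_k] + 1/[c_1,…,c_ℓ] = 1, where [b_1,…,b_k] = b_1 - 1/[b_2,…,b_k]. -/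
/-!
Write `[b_1, …, b_k] = p / q` with `0 ≤ q < p`; the claim is that the dual continued fraction
is `p / (p - q)`. Prefixing a list by `j` twos acts on `p / q` by the Möbius map of
`[[j + 1, -j], [j, 1 - j]]`, and prepending an entry `c` by that of `[[c, -1], [1, 0]]`.
Peeling off the first block `(n₀·2, m₁+3)` of the sequence, which corresponds to the block
`(n₀+2, m₁·2)` of the dual with the next entry raised by one, both sides become explicit
fractions in `p` and `q`, and the invariant propagates by a polynomial identity.
-/

/-- Continued fraction `[b_1, …, b_k] = b_1 - 1/[b_2, …, b_k]`, with `[b] = b`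
(using the junk value `1/0 = 0` in `ℚ` for the empty list, so that `cfrac [b] = b`). -/
def cfrac : List ℤ → ℚ
  | [] => 0
  | b :: l => (b : ℚ) - 1 / cfrac l

lemma cfrac_cons (b : ℤ) (l : List ℤ) : cfrac (b :: l) = (b : ℚ) - 1 / cfrac l := rfl

lemma cfrac_singleton (b : ℤ) : cfrac [b] = b := by
  simp [cfrac]

lemma cfrac_cons_add (c d : ℤ) (l : List ℤ) : cfrac ((c + d) :: l) = cfrac (c :: l) + d := by
  simp only [cfrac_cons, Int.cast_add]
  ring

lemma cfrac_cons_of_eq_div {l : List ℤ} {p q : ℚ} (hp : p ≠ 0) (h : cfrac l = p / q) (b : ℤ) :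
    cfrac (b :: l) = (b * p - q) / p := by
  rw [cfrac_cons, h, one_div_div]
  field_simp

/-- Here `q = 0` is allowed: `cfrac [] = 1 / 0`. -/
lemma cfrac_replicate_two_append {l : List ℤ} {p q : ℚ} (hp : 0 < p) (hqp : q ≤ p)
    (h : cfrac l = p / q) (j : ℕ) :
    cfrac (List.replicate j 2 ++ l) = ((j + 1) * p - j * q) / (j * p - (j - 1) * q) := by
  induction j with
  | zero => simpa using h
  | succ j ih =>
    have hnum : ((j : ℚ) + 1) * p - j * q ≠ 0 := by
      nlinarith [(Nat.cast_nonneg j : (0 : ℚ) ≤ j)]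
    rw [List.replicate_succ, List.cons_append, cfrac_cons_of_eq_div hnum ih]
    push_cast
    congr 1 <;> ring

lemma cfrac_replicate_two (j : ℕ) : cfrac (List.replicate j 2) = (j + 1) / j := by
  simpa using cfrac_replicate_two_append one_pos zero_le_one (by simp [cfrac]) j (l := [])

def DualFractions (B C : List ℤ) : Prop :=
  ∃ p q : ℚ, 0 ≤ q ∧ q < p ∧ cfrac B = p / q ∧ cfrac C = p / (p - q)

lemma DualFractions.one_div_add_one_div {B C : List ℤ} (h : DualFractions B C) :
    1 / cfrac B + 1 / cfrac C = 1 := by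
  obtain ⟨p, q, hq, hqp, hB, hC⟩ := h
  rw [hB, hC, one_div_div, one_div_div, ← add_div, add_sub_cancel, div_self]
  linarith

lemma dualFractions_replicate_two (j : ℕ) :
    DualFractions (List.replicate j 2) [(j : ℤ) + 1] := by
  refine ⟨j + 1, j, j.cast_nonneg, lt_add_one _, cfrac_replicate_two j, ?_⟩
  simp [cfrac_singleton]

lemma DualFractions.replicate_two_append_cons {B : List ℤ} {c : ℤ} {t : List ℤ}
    (h : DualFractions B (c :: t)) (a b : ℕ) :
    DualFractions (List.replicate a 2 ++ ((b : ℤ) + 3) :: B)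
      (((a : ℤ) + 2) :: (List.replicate b 2 ++ (c + 1) :: t)) := by
  obtain ⟨p, q, hq, hqp, hB, hC⟩ := h
  have ha : (0 : ℚ) ≤ a := a.cast_nonneg
  have hb : (0 : ℚ) ≤ b := b.cast_nonneg
  have hp : 0 < p := hq.trans_lt hqp
  have hB' : cfrac (((b : ℤ) + 3) :: B) = ((b + 3) * p - q) / p := by
    rw [cfrac_cons_of_eq_div hp.ne' hB]
    push_cast
    rfl
  have hC' : cfrac ((c + 1) :: t) = (2 * p - q) / (p - q) := by
    rw [cfrac_cons_add, hC]
    field_simp [(sub_pos.2 hqp).ne']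
    push_cast
    ring
  have hC'' := cfrac_replicate_two_append (by linarith) (by linarith) hC' b
  have hN : 0 < (b + 2) * p - q := by nlinarith
  refine ⟨(a + 1) * ((b + 3) * p - q) - a * p, a * ((b + 3) * p - q) - (a - 1) * p,
    by nlinarith [mul_nonneg ha hN.le], by nlinarith,
    cfrac_replicate_two_append (by nlinarith) (by nlinarith) hB' a, ?_⟩
  rw [cfrac_cons_of_eq_div (by nlinarith) hC'']
  push_cast
  congr 1 <;> ring

lemma buildB_succ (s : ℕ) (n m : ℕ → ℕ) :
    buildB (s + 1) n m = List.replicate (n 0) 2 ++ ((m 1 : ℤ) + 3) ::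
      buildB s (n ∘ Nat.succ) (m ∘ Nat.succ) := by
  simp [buildB, List.range_succ_eq_map, List.flatMap_map, Function.comp]

lemma buildC_succ (s : ℕ) (n m : ℕ → ℕ) :
    ∃ c t, buildC s (n ∘ Nat.succ) (m ∘ Nat.succ) = c :: t ∧
      buildC (s + 1) n m = ((n 0 : ℤ) + 2) :: (List.replicate (m 1) 2 ++ (c + 1) :: t) := by
  cases s with
  | zero =>
    refine ⟨(n 1 : ℤ) + 1, [], by simp [buildC], ?_⟩
    simp [buildC, add_assoc]
  | succ s =>
    refine ⟨(n 1 : ℤ) + 2, (List.range (s + 1)).flatMap (fun i =>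
      List.replicate (m (i + 2)) 2 ++ [(n (i + 2) : ℤ) + if i + 1 = s + 1 then 2 else 3]),
      by simp [buildC, Function.comp], ?_⟩
    simp [buildC, List.range_succ_eq_map, List.flatMap_map, add_assoc, @eq_comm _ 0]

lemma dualFractions_buildB_buildC (s : ℕ) (n m : ℕ → ℕ) :
    DualFractions (buildB s n m) (buildC s n m) := by
  induction s generalizing n m with
  | zero => simpa [buildB, buildC] using dualFractions_replicate_two (n 0)
  | succ s ih =>
    obtain ⟨c, t, hC, hC_succ⟩ := buildC_succ s n m
    rw [buildB_succ, hC_succ]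
    exact (hC ▸ ih (n ∘ Nat.succ) (m ∘ Nat.succ)).replicate_two_append_cons (n 0) (m 1)

theorem stmt5_general (s : ℕ) (n m : ℕ → ℕ) :
    1 / cfrac (buildB s n m) + 1 / cfrac (buildC s n m) = 1 :=
  (dualFractions_buildB_buildC s n m).one_div_add_one_div

/-- (Riemenschneider/Neumann duality.)  For a nonempty sequence
`b_1, …, b_k` of integers `≥ 2` with dual sequence `c_1, …, c_ℓ`, the continued fractions
satisfy `1/[b_1,…,b_k] + 1/[c_1,…,c_ℓ] = 1`. -/
theorem stmt5 (s : ℕ) (n m : ℕ → ℕ) (hne : buildB s n m ≠ []) :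
    1 / cfrac (buildB s n m) + 1 / cfrac (buildC s n m) = 1 :=
  stmt5_general s n m
end

section
/- Let M be a Seifert fibered graph manifold given by a star-shaped plumbing graph with central vertex of weight e and m arms, where arm i consists of a chain with weights e_{i,1}, …, e_{i,s_i}, all ≤ -2. Define the Euler number 𝐞(M) = e - Σ_{i=1}^m 1/[-e_{i,1}, …, -e_{i,s_i}], where [b_1,…,b_s] = b_1 - 1/[b_2,…,b_s]. If the intersection form of the star-shaped graph is negative definite, then 𝐞(M) < 0. -/
open scoped BigOperators

/-- A real matrix is negative definite iff its negation is positive definite. -/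
def Matrix.NegDef {n : Type*} [Fintype n] (M : Matrix n n ℝ) : Prop :=
  (-M).PosDef

/-- The vertex set of a star-shaped graph with center (`none`) and `m` arms, arm `i` being
a chain of length `s i`. -/
abbrev StarV (m : ℕ) (s : Fin m → ℕ) : Type := Option (Σ i : Fin m, Fin (s i))

/-- The intersection matrix of the star-shaped graph: the center `v₀` has weight `e`,
vertex `v_{i,j}` has weight `w i j`, the center is joined to each `v_{i,1}`, and `v_{i,j}`
is joined to `v_{i,j+1}`. -/
def starMatrix (m : ℕ) (s : Fin m → ℕ) (e : ℤ) (w : (i : Fin m) → Fin (s i) → ℤ) :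
    Matrix (StarV m s) (StarV m s) ℝ :=
  fun u v => match u, v with
  | none, none => (e : ℝ)
  | none, some ⟨_, j⟩ => if (j : ℕ) = 0 then 1 else 0
  | some ⟨_, j⟩, none => if (j : ℕ) = 0 then 1 else 0
  | some ⟨i, j⟩, some ⟨i', j'⟩ =>
      if i = i' then
        (if (j : ℕ) = (j' : ℕ) then (w i j : ℝ)
          else if (j : ℕ) + 1 = (j' : ℕ) ∨ (j' : ℕ) + 1 = (j : ℕ) then 1 else 0)
      else 0

/-!
The arms contribute terms `1 / [b_1, …, b_s]` with all `b_k ≥ 2`; such a continued fraction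
exceeds `1`, so each term is nonnegative (an empty arm gives the junk term `1 / 0 = 0`).
Negative definiteness forces every diagonal entry of the intersection form to be negative,
in particular `e < 0`, and therefore `𝐞(M) < 0`.
-/

theorem one_lt_cfrac {l : List ℤ} (hl : l ≠ []) (h : ∀ x ∈ l, 2 ≤ x) : 1 < cfrac l := by
  induction l with
  | nil => exact absurd rfl hl
  | cons b t ih =>
    have hb : (2 : ℚ) ≤ b := by exact_mod_cast h b List.mem_cons_self
    rcases eq_or_ne t [] with rfl | ht
    · simp only [cfrac, div_zero, sub_zero]
      linarith
    · have ht1 : 1 < cfrac t := ih ht fun x hx => h x (List.mem_cons_of_mem _ hx)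
      have hinv : 1 / cfrac t < 1 := (div_lt_one (by linarith)).mpr ht1
      simp only [cfrac]
      linarith

theorem cfrac_nonneg {l : List ℤ} (h : ∀ x ∈ l, 2 ≤ x) : 0 ≤ cfrac l := by
  rcases eq_or_ne l [] with rfl | hl
  · rfl
  · exact zero_le_one.trans (one_lt_cfrac hl h).le

theorem Matrix.NegDef.diag_neg {n : Type*} [Fintype n] {M : Matrix n n ℝ} (hM : M.NegDef)
    (i : n) : M i i < 0 :=
  neg_pos.mp (Matrix.PosDef.diag_pos hM (i := i))

theorem stmt9_general (m : ℕ) (s : Fin m → ℕ)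
    (e : ℤ) (w : (i : Fin m) → Fin (s i) → ℤ) (hw : ∀ i j, w i j ≤ -2)
    (hneg : (starMatrix m s e w).NegDef) :
    (e : ℚ) - ∑ i : Fin m, 1 / cfrac (List.ofFn fun j : Fin (s i) => -(w i j)) < 0 := by
  have he : (e : ℝ) < 0 := hneg.diag_neg none
  have hsum : 0 ≤ ∑ i : Fin m, 1 / cfrac (List.ofFn fun j : Fin (s i) => -(w i j)) := by
    refine Finset.sum_nonneg fun i _ => one_div_nonneg.mpr (cfrac_nonneg ?_)
    simp only [List.mem_ofFn, forall_exists_index]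
    rintro _ j rfl
    linarith [hw i j]
  have he' : (e : ℚ) < 0 := by exact_mod_cast he
  linarith

/-- Let `M` be the Seifert fibered graph manifold given by a star-shaped
plumbing graph with central vertex of weight `e` and `m` arms, arm `i` being a chain with
weights `e_{i,1}, …, e_{i,s_i}`, all `≤ -2`.  Define the Euler number
`𝐞(M) = e - Σ_{i=1}^m 1/[-e_{i,1}, …, -e_{i,s_i}]`.  If the intersection form of the
star-shaped graph is negative definite, then `𝐞(M) < 0`. -/
theorem stmt9 (m : ℕ) (s : Fin m → ℕ) (hs : ∀ i, 1 ≤ s i)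
    (e : ℤ) (w : (i : Fin m) → Fin (s i) → ℤ) (hw : ∀ i j, w i j ≤ -2)
    (hneg : (starMatrix m s e w).NegDef) :
    (e : ℚ) - ∑ i : Fin m, 1 / cfrac (List.ofFn fun j : Fin (s i) => -(w i j)) < 0 :=
  stmt9_general m s e w hw hneg
end

section
/- Let α ∈ {1,-1}, β ∈ ℤ, and set H = [[α, 0], [β, α]] (note the lower-right entry is +α, the 'orientation-preserving' case). Let B = [[d_k, c_k], [-d_{k-1}, -c_{k-1}]] with c_{k-1}d_k - c_k d_{k-1} = 1, gcd(c_k,d_k) = 1, c_k ≥ k+1 ≥ 2, d_k ≥ k ≥ 1. If B·H·B⁻¹ also has the form [[α', 0], [β', α']] for some α' ∈ {1,-1}, β' ∈ ℤ, then α' = α and β = β' = 0. -/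
/-! Since `B⁻¹` exists, the hypothesis says `B H = H' B`. Comparing entries, the `(0,1)` entry
gives `c_k α = α' c_k`, and with `α = α'` the diagonal entries give `c_k β = 0` and
`c_k β' = 0`; everything then follows from `c_k ≠ 0`. -/

theorem Matrix.shears_eq_of_intertwined {R : Type*} [CommRing R] [IsDomain R]
    {p q r s α β α' β' : R} (hq : q ≠ 0)
    (h : !![p, q; r, s] * !![α, 0; β, α] = !![α', 0; β', α'] * !![p, q; r, s]) :
    α' = α ∧ β = 0 ∧ β' = 0 := by
  rw [Matrix.mul_fin_two, Matrix.mul_fin_two] at h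
  have h00 := congr_fun (congr_fun h 0) 0
  have h01 := congr_fun (congr_fun h 0) 1
  have h11 := congr_fun (congr_fun h 1) 1
  simp only [Matrix.of_apply, Matrix.cons_val', Matrix.cons_val_zero, Matrix.cons_val_one,
    Matrix.empty_val', Matrix.cons_val_fin_one] at h00 h01 h11
  have hα : α' = α := mul_left_cancel₀ hq (by linear_combination -h01)
  subst hα
  exact ⟨rfl, (mul_eq_zero.mp (by linear_combination h00)).resolve_left hq,
    (mul_eq_zero.mp (by linear_combination -h11)).resolve_left hq⟩

theorem stmt13_general (α β : ℤ)
    (k : ℕ)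
    (ck dk ck1 dk1 : ℤ)
    (hdet : ck1 * dk - ck * dk1 = 1)
    (hck : (k : ℤ) + 1 ≤ ck)
    (H B : Matrix (Fin 2) (Fin 2) ℚ)
    (hH : H = !![(α : ℚ), 0; (β : ℚ), (α : ℚ)])
    (hB : B = !![(dk : ℚ), (ck : ℚ); -(dk1 : ℚ), -(ck1 : ℚ)])
    (α' β' : ℤ)
    (hconj : B * H * B⁻¹ = !![(α' : ℚ), 0; (β' : ℚ), (α' : ℚ)]) :
    α' = α ∧ β = 0 ∧ β' = 0 := by
  have hdetB : IsUnit B.det := by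
    have hdetQ : (ck1 : ℚ) * dk - ck * dk1 = 1 := by exact_mod_cast hdet
    rw [hB, Matrix.det_fin_two_of,
      show (dk : ℚ) * -ck1 - ck * -dk1 = -1 by linear_combination -hdetQ]
    exact isUnit_one.neg
  have hck0 : (ck : ℚ) ≠ 0 := by exact_mod_cast (by omega : ck ≠ 0)
  have hmul : B * H = !![(α' : ℚ), 0; (β' : ℚ), (α' : ℚ)] * B := by
    rw [← hconj, Matrix.nonsing_inv_mul_cancel_right _ _ hdetB]
  subst hB hH
  obtain ⟨h1, h2, h3⟩ := Matrix.shears_eq_of_intertwined hck0 hmul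
  exact ⟨by exact_mod_cast h1, by exact_mod_cast h2, by exact_mod_cast h3⟩

/-- Let `α ∈ {1,-1}`, `β ∈ ℤ`, `H = [[α,0],[β,α]]`, and let
`B = [[d_k, c_k], [-d_{k-1}, -c_{k-1}]]` with `c_{k-1}d_k - c_k d_{k-1} = 1`,
`gcd(c_k, d_k) = 1`, `c_k ≥ k+1 ≥ 2`, `d_k ≥ k ≥ 1`.  If `B·H·B⁻¹` also has the form
`[[α',0],[β',α']]` with `α' ∈ {1,-1}`, `β' ∈ ℤ`, then `α' = α` and `β = β' = 0`. -/
theorem stmt13 (α β : ℤ) (hα : α = 1 ∨ α = -1)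
    (k : ℕ) (hk : 1 ≤ k)
    (ck dk ck1 dk1 : ℤ)
    (hdet : ck1 * dk - ck * dk1 = 1)
    (hgcd : Int.gcd ck dk = 1)
    (hck : (k : ℤ) + 1 ≤ ck) (hdk : (k : ℤ) ≤ dk)
    (H B : Matrix (Fin 2) (Fin 2) ℚ)
    (hH : H = !![(α : ℚ), 0; (β : ℚ), (α : ℚ)])
    (hB : B = !![(dk : ℚ), (ck : ℚ); -(dk1 : ℚ), -(ck1 : ℚ)])
    (α' β' : ℤ) (hα' : α' = 1 ∨ α' = -1)
    (hconj : B * H * B⁻¹ = !![(α' : ℚ), 0; (β' : ℚ), (α' : ℚ)]) :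
    α' = α ∧ β = 0 ∧ β' = 0 :=
  stmt13_general α β k ck dk ck1 dk1 hdet hck H B hH hB α' β' hconj
end
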